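/- arXiv:2208.05425 — 4 statements merged into one kernel-verified Lean document; each statement's English description precedes it below -/
import Mathlib

section
/- Under the assumptions 0 < p ≤ τ·α < β < 1/2, 0 < α, 0 < τ, and α + β < 1, if T < p·(1 - τ·α - β) / ((1 - τ·α + p)·(1 - τ·α)), then β/(1 - τ·α) · β/(β + τ·α) < ((β + p)/(1 - τ·α + p) - T) · β/(β + τ·α). -/
theorem stmt0 (p α β τ T : ℝ)
    (h1 : 0 < p) (h2 : p ≤ τ * α) (h3 : τ * α < β) (h4 : β < 1/2)
    (h5 : 0 < α) (h6 : 0 < τ) (h7 : α + β < 1)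
    (hT : T < p * (1 - τ * α - β) / ((1 - τ * α + p) * (1 - τ * α))) :
    β / (1 - τ * α) * (β / (β + τ * α)) <
      ((β + p) / (1 - τ * α + p) - T) * (β / (β + τ * α)) := by
  have ha : 0 < 1 - τ * α := by nlinarith
  have hb : 0 < 1 - τ * α + p := by linarith
  have hc : 0 < β + τ * α := by nlinarith
  rw [lt_div_iff₀ (mul_pos hb ha)] at hT
  have key : β / (1 - τ * α) < (β + p) / (1 - τ * α + p) - T := by
    rw [div_lt_iff₀ ha, sub_mul, lt_sub_iff_add_lt, div_mul_eq_mul_div,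
      lt_div_iff₀ hb]
    nlinarith [hT]
  exact mul_lt_mul_of_pos_right key (div_pos (by linarith) hc)
end

section
/- Under the assumptions 0 < p ≤ τ·α < β < 1/2, 0 < α < 1, 0 < τ < 1/2, and α + β < 1, the inequality T + (p/α)·((1-τ)·α/(1 - τ·α + p) + ((β + p)/(1 - τ·α + p) - T)·(τ·α/(β + τ·α))) > (p/α)·((1-τ)·α/(1 - τ·α) + (β/(1 - τ·α))·(τ·α/(β + τ·α))) holds whenever T > ((β + τ·α)/(β + τ·α - p·τ)) · (1/((1 - τ·α)(1 - τ·α + p))) · (p/α) · (p·(1-τ)·α + (τ·α/(β + τ·α))·(p·β - p·(1 - τ·α))). -/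
/-!
With `C = β + τα` and `D = C - pτ`, the revenue gain of the trade is affine in `T` with slope
`D / C`, and it vanishes exactly at the lower bound on `T`. The slope is positive because
`pτ ≤ τ²α < τα`, so the gain is positive as soon as `T` exceeds that bound.
-/

namespace BlockWithholding

noncomputable section

def revenueWithTrade (p α β τ T : ℝ) : ℝ :=
  T + (p / α) * ((1 - τ) * α / (1 - τ * α + p) +
    ((β + p) / (1 - τ * α + p) - T) * (τ * α / (β + τ * α)))

def revenueWithoutTrade (p α β τ : ℝ) : ℝ :=
  (p / α) * ((1 - τ) * α / (1 - τ * α) + (β / (1 - τ * α)) * (τ * α / (β + τ * α)))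

def tradeThreshold (p α β τ : ℝ) : ℝ :=
  ((β + τ * α) / (β + τ * α - p * τ)) * (1 / ((1 - τ * α) * (1 - τ * α + p))) * (p / α) *
    (p * (1 - τ) * α + (τ * α / (β + τ * α)) * (p * β - p * (1 - τ * α)))

theorem revenueWithTrade_sub_revenueWithoutTrade {p α β τ : ℝ} (T : ℝ) (hα : α ≠ 0)
    (hA : 1 - τ * α ≠ 0) (hB : 1 - τ * α + p ≠ 0) (hC : β + τ * α ≠ 0)
    (hD : β + τ * α - p * τ ≠ 0) :
    revenueWithTrade p α β τ T - revenueWithoutTrade p α β τ =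
      (β + τ * α - p * τ) / (β + τ * α) * (T - tradeThreshold p α β τ) := by
  unfold revenueWithTrade revenueWithoutTrade tradeThreshold
  simp only [mul_comm τ α] at hA hB hC hD ⊢
  field_simp
  ring

theorem revenueWithoutTrade_lt_revenueWithTrade_iff {p α β τ : ℝ} (T : ℝ) (hα : α ≠ 0)
    (hA : 1 - τ * α ≠ 0) (hB : 1 - τ * α + p ≠ 0) (hC : 0 < β + τ * α)
    (hD : 0 < β + τ * α - p * τ) :
    revenueWithoutTrade p α β τ < revenueWithTrade p α β τ T ↔ tradeThreshold p α β τ < T := by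
  rw [← sub_pos, revenueWithTrade_sub_revenueWithoutTrade T hα hA hB hC.ne' hD.ne',
    mul_pos_iff_of_pos_left (div_pos hD hC), sub_pos]

end

end BlockWithholding

open BlockWithholding in
theorem stmt5_general (p α β τ T : ℝ)
    (h1 : 0 < p) (h2 : p ≤ τ * α) (h3 : τ * α < β) (h4 : β < 1/2)
    (h5 : 0 < α) (h6 : 0 < τ) (h6' : τ < 1/2)
    (hT : T > ((β + τ * α) / (β + τ * α - p * τ)) *
      (1 / ((1 - τ * α) * (1 - τ * α + p))) * (p / α) *
      (p * (1 - τ) * α + (τ * α / (β + τ * α)) * (p * β - p * (1 - τ * α)))) :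
    T + (p / α) * ((1 - τ) * α / (1 - τ * α + p) +
        ((β + p) / (1 - τ * α + p) - T) * (τ * α / (β + τ * α))) >
      (p / α) * ((1 - τ) * α / (1 - τ * α) +
        (β / (1 - τ * α)) * (τ * α / (β + τ * α))) := by
  have hτα : 0 < τ * α := mul_pos h6 h5
  have hA : 0 < 1 - τ * α := by linarith
  have hC : 0 < β + τ * α := by linarith
  have hD : 0 < β + τ * α - p * τ := by nlinarith
  exact (revenueWithoutTrade_lt_revenueWithTrade_iff T h5.ne' hA.ne' (by linarith) hC hD).2 hT

theorem stmt5 (p α β τ T : ℝ)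
    (h1 : 0 < p) (h2 : p ≤ τ * α) (h3 : τ * α < β) (h4 : β < 1/2)
    (h5 : 0 < α) (h5' : α < 1) (h6 : 0 < τ) (h6' : τ < 1/2) (h7 : α + β < 1)
    (hT : T > ((β + τ * α) / (β + τ * α - p * τ)) *
      (1 / ((1 - τ * α) * (1 - τ * α + p))) * (p / α) *
      (p * (1 - τ) * α + (τ * α / (β + τ * α)) * (p * β - p * (1 - τ * α)))) :
    T + (p / α) * ((1 - τ) * α / (1 - τ * α + p) +
        ((β + p) / (1 - τ * α + p) - T) * (τ * α / (β + τ * α))) >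
      (p / α) * ((1 - τ) * α / (1 - τ * α) +
        (β / (1 - τ * α)) * (τ * α / (β + τ * α))) :=
  stmt5_general p α β τ T h1 h2 h3 h4 h5 h6 h6' hT
end

section
/- Assume 0 < p ≤ τ·α < β < 1/2, 0 < α < 1, 0 < τ < 1/2, and α + β < 1. Then the lower bound L = ((β + τ·α)/(β + τ·α - p·τ)) · (1/((1 - τ·α)(1 - τ·α + p))) · (p/α) · (p·(1-τ)·α + (τ·α/(β + τ·α))·(p·β - p·(1 - τ·α))) is strictly less than the upper bound U = p·(1 - τ·α - β)/((1 - τ·α + p)(1 - τ·α)). -/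
theorem stmt10 (p α β τ : ℝ)
    (h1 : 0 < p) (h2 : p ≤ τ * α) (h3 : τ * α < β) (h4 : β < 1/2)
    (h5 : 0 < α) (h5' : α < 1) (h6 : 0 < τ) (h6' : τ < 1/2) (h7 : α + β < 1) :
    ((β + τ * α) / (β + τ * α - p * τ)) *
      (1 / ((1 - τ * α) * (1 - τ * α + p))) * (p / α) *
      (p * (1 - τ) * α + (τ * α / (β + τ * α)) * (p * β - p * (1 - τ * α))) <
    p * (1 - τ * α - β) / ((1 - τ * α + p) * (1 - τ * α)) := by
  have hta : τ * α < 1/2 := lt_trans h3 h4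
  have hD1 : 0 < β + τ * α - p * τ := by nlinarith
  have hA : 0 < 1 - τ * α := by linarith
  have hB : 0 < 1 - τ * α + p := by linarith
  have hS : 0 < β + τ * α := by nlinarith
  have h8 : p * (1 - τ) + τ * α + β < 1 := by
    nlinarith [mul_pos h5 (mul_pos h6 h6), mul_pos h5 (pow_pos (by linarith : (0:ℝ) < 1 - τ) 2)]
  have hkey : p * (β + τ * α - τ) < (1 - τ * α - β) * (β + τ * α - p * τ) := by
    nlinarith [mul_pos hS (by linarith : (0:ℝ) < 1 - τ * α - β - p * (1 - τ))]
  have hLHS : ((β + τ * α) / (β + τ * α - p * τ)) *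
      (1 / ((1 - τ * α) * (1 - τ * α + p))) * (p / α) *
      (p * (1 - τ) * α + (τ * α / (β + τ * α)) * (p * β - p * (1 - τ * α)))
      = p * p * (β + τ * α - τ) / ((β + τ * α - p * τ) * ((1 - τ * α) * (1 - τ * α + p))) := by
    field_simp
    ring
  rw [hLHS, div_lt_div_iff₀ (by positivity) (by positivity)]
  nlinarith [mul_pos (mul_pos hA hB) hD1, mul_pos h1 (mul_pos hA hB)]
end

section
/- Assume 0 < p ≤ τ·α < β < 1/2, 0 < α < 1, 0 < τ < 1/2, and α + β < 1. Then there exists a real number T such that simultaneously: (C1) ((β + p)/(1 - τ·α + p) - T)·(β/(β + τ·α)) > (β/(1 - τ·α))·(β/(β + τ·α)); (C2) T + (p/α)·((1-τ)·α/(1 - τ·α + p) + ((β + p)/(1 - τ·α + p) - T)·(τ·α/(β + τ·α))) > (p/α)·((1-τ)·α/(1 - τ·α) + (β/(1 - τ·α))·(τ·α/(β + τ·α))); and (C3) T < τ·α. -/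
set_option maxHeartbeats 4000000 in
theorem stmt11 (p α β τ : ℝ)
    (h1 : 0 < p) (h2 : p ≤ τ * α) (h3 : τ * α < β) (h4 : β < 1/2)
    (h5 : 0 < α) (h5' : α < 1) (h6 : 0 < τ) (h6' : τ < 1/2) (h7 : α + β < 1) :
    ∃ T : ℝ,
      (((β + p) / (1 - τ * α + p) - T) * (β / (β + τ * α)) >
        (β / (1 - τ * α)) * (β / (β + τ * α))) ∧
      (T + (p / α) * ((1 - τ) * α / (1 - τ * α + p) +
          ((β + p) / (1 - τ * α + p) - T) * (τ * α / (β + τ * α))) >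
        (p / α) * ((1 - τ) * α / (1 - τ * α) +
          (β / (1 - τ * α)) * (τ * α / (β + τ * α)))) ∧
      T < τ * α := by
  have hτα : 0 < τ * α := mul_pos h6 h5
  have hβ : 0 < β := lt_trans hτα h3
  have hQ : 0 < 1 - τ * α := by nlinarith
  have hS : 0 < β + τ * α := by linarith
  have hp1 : p < 1 := by nlinarith
  have hSpτ : 0 < β + τ * α - p * τ := by nlinarith
  have hkey : p < 1 - τ * α - β := by nlinarith
  have hkey2 : p * (β + τ * α - τ) < (1 - τ * α - β) * (β + τ * α - p * τ) := by
    nlinarith [mul_pos (show (0:ℝ) < 1 - τ * α - β - p by linarith) hSpτ,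
      mul_pos (mul_pos h1 h6) (show (0:ℝ) < 1 - p by linarith)]
  have hQβ : 1 - τ * α - β < (1 - τ * α) * (1 - τ * α + p) := by nlinarith
  have hQne : (1 - τ * α) ≠ 0 := ne_of_gt hQ
  have hSne : (β + τ * α) ≠ 0 := ne_of_gt hS
  have hR : 0 < 1 - τ * α + p := by linarith
  have hRne : (1 - τ * α + p) ≠ 0 := ne_of_gt hR
  have hSpτne : (β + τ * α - p * τ) ≠ 0 := ne_of_gt hSpτ
  have hαne : α ≠ 0 := ne_of_gt h5
  refine ⟨p * (((1 - τ * α) - β) * ((β + τ * α) - p * τ) + p * ((β + τ * α) - τ)) / (2 * (1 - τ * α) * (1 - τ * α + p) * ((β + τ * α) - p * τ)), ?_, ?_, ?_⟩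
  · rw [gt_iff_lt, ← sub_pos]
    have e1 : ((β + p) / (1 - τ * α + p) - p * (((1 - τ * α) - β) * ((β + τ * α) - p * τ) + p * ((β + τ * α) - τ)) / (2 * (1 - τ * α) * (1 - τ * α + p) * ((β + τ * α) - p * τ))) * (β / (β + τ * α)) - (β / (1 - τ * α)) * (β / (β + τ * α))
        = p * (((1 - τ * α) - β) * ((β + τ * α) - p * τ) - p * ((β + τ * α) - τ)) * β / (2 * (1 - τ * α) * (1 - τ * α + p) * ((β + τ * α) - p * τ) * (β + τ * α)) := by
      field_simp
      ring
    rw [e1]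
    apply div_pos
    · exact mul_pos (mul_pos h1 (sub_pos.mpr hkey2)) hβ
    · positivity
  · rw [gt_iff_lt, ← sub_pos]
    have e2 : (p * (((1 - τ * α) - β) * ((β + τ * α) - p * τ) + p * ((β + τ * α) - τ)) / (2 * (1 - τ * α) * (1 - τ * α + p) * ((β + τ * α) - p * τ)) + (p / α) * ((1 - τ) * α / (1 - τ * α + p) +
          ((β + p) / (1 - τ * α + p) - p * (((1 - τ * α) - β) * ((β + τ * α) - p * τ) + p * ((β + τ * α) - τ)) / (2 * (1 - τ * α) * (1 - τ * α + p) * ((β + τ * α) - p * τ))) * (τ * α / (β + τ * α))))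
        - (p / α) * ((1 - τ) * α / (1 - τ * α) + (β / (1 - τ * α)) * (τ * α / (β + τ * α)))
        = p * (((1 - τ * α) - β) * ((β + τ * α) - p * τ) - p * ((β + τ * α) - τ)) / (2 * (1 - τ * α) * (1 - τ * α + p) * (β + τ * α)) := by
      field_simp
      ring
    rw [e2]
    apply div_pos
    · exact mul_pos h1 (sub_pos.mpr hkey2)
    · positivity
  · rw [div_lt_iff₀ (by positivity)]
    nlinarith [mul_lt_mul_of_pos_left hkey2 h1,
      mul_le_mul_of_nonneg_right h2 (le_of_lt (mul_pos (show (0:ℝ) < (1 - τ * α) - β by linarith) hSpτ)),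
      mul_lt_mul_of_pos_left (mul_lt_mul_of_pos_right hQβ hSpτ) hτα]
end
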